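/- arXiv:2302.02652 — 2 statements merged into one kernel-verified Lean document; each statement's English description precedes it below -/
import Mathlib

section
/- For a finite cycle set, every element of the structure monoid M is uniquely determined by the diagonal part of its image under the monomial representation; consequently Θ is injective on M and M embeds in the structure group G. -/
/-- Dehornoy's `Ω` expression: `Omega op k t` is `Ω_{k+1}(t 0, …, t k)`,
defined by `Ω_1(x) = x` and
`Ω_k(x_1,…,x_k) = Ω_{k-1}(x_1,…,x_{k-1}) * Ω_{k-1}(x_1,…,x_{k-2},x_k)`. -/
def Omega {S : Type*} (op : S → S → S) : (k : ℕ) → (Fin (k + 1) → S) → S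
  | 0, t => t 0
  | k + 1, t =>
      op (Omega op k fun i => t i.castSucc)
        (Omega op k fun i =>
          if i = Fin.last k then t (Fin.last (k + 1)) else t i.castSucc)

/-- Dehornoy's `Π` expression: `PiExpr op ι k t = ι(Ω_1(t_1)) ⋯ ι(Ω_k(t_1,…,t_k))`. -/
def PiExpr {S M : Type*} [Monoid M] (op : S → S → S) (ι : S → M) :
    (k : ℕ) → (Fin k → S) → M
  | 0, _ => 1
  | k + 1, t => PiExpr op ι k (fun i => t i.castSucc) * ι (Omega op k t)

/-- The defining relations of the structure monoid: `s (s*t) = t (t*s)`. -/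
def csRel {S : Type*} (op : S → S → S) (a b : FreeMonoid S) : Prop :=
  ∃ s t : S, a = FreeMonoid.of s * FreeMonoid.of (op s t) ∧
    b = FreeMonoid.of t * FreeMonoid.of (op t s)

/-- The structure monoid `⟨S ∣ s(s*t) = t(t*s)⟩⁺` of a cycle set. -/
abbrev StructureMonoid {S : Type*} (op : S → S → S) := (conGen (csRel op)).Quotient

/-- The canonical generators of the structure monoid. -/
def mkM {S : Type*} (op : S → S → S) (s : S) : StructureMonoid op :=
  (conGen (csRel op)).mk' (FreeMonoid.of s)

/-- The permutation matrix of `σ`: row `i` has a `1` in column `σ i`. -/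
def Pmat {ι : Type*} [DecidableEq ι] (R : Type*) [Semiring R] (σ : Equiv.Perm ι) :
    Matrix ι ι R := Matrix.of fun i j => if j = σ i then 1 else 0

/-- The diagonal matrix `D_s = diag(1,…,q,…,1)` with `q` in position `s`. -/
noncomputable def Dmat {S : Type*} [DecidableEq S] (s : S) : Matrix S S (Polynomial ℚ) :=
  Matrix.diagonal fun t => if t = s then Polynomial.X else 1

/-- The permutation `ψ(s) : t ↦ s * t` attached to an element of a cycle set. -/
noncomputable def psi {S : Type*} (op : S → S → S) (hbij : ∀ s : S, Function.Bijective (op s))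
    (s : S) : Equiv.Perm S := Equiv.ofBijective (op s) (hbij s)

/-- The monomial matrix `Θ(s) = D_s P_{ψ(s)}` associated to a generator. -/
noncomputable def theta {S : Type*} [Fintype S] [DecidableEq S] (op : S → S → S)
    (hbij : ∀ s : S, Function.Bijective (op s)) (s : S) : Matrix S S (Polynomial ℚ) :=
  Dmat s * Pmat (Polynomial ℚ) (psi op hbij s)
/-- The defining relators of the structure group: `s (s*t) (t (t*s))⁻¹`. -/
def csGrpRels {S : Type*} (op : S → S → S) : Set (FreeGroup S) :=
  { r | ∃ s t : S, r = FreeGroup.of s * FreeGroup.of (op s t) *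
      (FreeGroup.of t * FreeGroup.of (op t s))⁻¹ }

/-- The structure group `⟨S ∣ s(s*t) = t(t*s)⟩` of a cycle set. -/
abbrev StructureGroup {S : Type*} (op : S → S → S) := PresentedGroup (csGrpRels op)

/-!
Write `Ω_{k+1}(x_1, …, x_k, u)` for Dehornoy's iterated products and
`Π(x_1, …, x_k) = Ω_1(x_1) Ω_2(x_1, x_2) ⋯ Ω_k(x_1, …, x_k)` in `M`. Because every `t ↦ s * t`
is bijective, each element of `M` is some `Π(x_1, …, x_k)`, and the cycle-set law together with
the defining relations makes `Π` symmetric in its arguments. Under `Θ`, `Π(x_1, …, x_k)` is the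
monomial matrix whose diagonal part is `diag(q ^ #{i | x_i = t})_t`; so the diagonal part
determines the multiset `{x_1, …, x_k}`, hence the element of `M`. Over `ℚ(q)` the matrices
`Θ(s)` are invertible, so `Θ` factors through `G`, and injectivity of `Θ` on `M` gives the
embedding `M ↪ G`.
-/

open Polynomial Matrix

section Monomial

variable {ι R : Type*} [Fintype ι] [DecidableEq ι] [CommRing R]

omit [Fintype ι] in
lemma Pmat_eq_permMatrix (σ : Equiv.Perm ι) : Pmat R σ = σ.permMatrix R := by
  ext i j
  simp [Pmat, PEquiv.toMatrix_apply, eq_comm]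

lemma diagonal_mul_Pmat_apply (d : ι → R) (σ : Equiv.Perm ι) (i j : ι) :
    (diagonal d * Pmat R σ) i j = if j = σ i then d i else 0 := by
  simp [diagonal_mul, Pmat]

lemma Pmat_mul_diagonal (e : ι → R) (σ : Equiv.Perm ι) :
    Pmat R σ * diagonal e = diagonal (e ∘ σ) * Pmat R σ := by
  ext i j
  by_cases h : j = σ i <;> simp [mul_diagonal, diagonal_mul, Pmat, h]

lemma diagonal_mul_Pmat_mul_diagonal_mul_Pmat (d e : ι → R) (σ τ : Equiv.Perm ι) :
    diagonal d * Pmat R σ * (diagonal e * Pmat R τ)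
      = diagonal (fun i => d i * e (σ i)) * Pmat R (σ.trans τ) := by
  rw [mul_assoc, ← mul_assoc (Pmat R σ), Pmat_mul_diagonal, mul_assoc, ← mul_assoc,
    diagonal_mul_diagonal, Pmat_eq_permMatrix, Pmat_eq_permMatrix, Pmat_eq_permMatrix,
    ← permMatrix_mul]
  rfl

lemma diagonal_eq_of_diagonal_mul_Pmat_eq {d d' : ι → R} {σ σ' : Equiv.Perm ι}
    (hd' : ∀ i, d' i ≠ 0) (h : diagonal d * Pmat R σ = diagonal d' * Pmat R σ') : d = d' := by
  funext i
  have hi := congr_fun₂ h i (σ' i)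
  simp only [diagonal_mul_Pmat_apply] at hi
  split_ifs at hi
  · exact hi
  · exact absurd hi.symm (hd' i)

omit [Fintype ι] in
lemma Pmat_map {R' : Type*} [CommRing R'] (f : R →+* R') (σ : Equiv.Perm ι) :
    (Pmat R σ).map f = Pmat R' σ := by
  ext i j
  simp [Pmat, apply_ite f]

lemma isUnit_diagonal_mul_Pmat {d : ι → R} (hd : ∀ i, IsUnit (d i)) (σ : Equiv.Perm ι) :
    IsUnit (diagonal d * Pmat R σ) := by
  refine (isUnit_diagonal.mpr (Pi.isUnit_iff.mpr hd)).mul ?_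
  simpa [Pmat_eq_permMatrix] using (Group.isUnit σ⁻¹).map (permMatrixHom (n := ι) (R := R))

end Monomial

section CycleSet

variable {S : Type*} (op : S → S → S)

/-- `omegaList op [x_k, …, x_1] u = Ω_{k+1}(x_1, …, x_k, u)`. -/
def omegaList : List S → S → S
  | [], u => u
  | x :: l, u => op (omegaList l x) (omegaList l u)

lemma omegaList_perm (hcs : ∀ s t u : S, op (op s t) (op s u) = op (op t s) (op t u))
    {l l' : List S} (h : l.Perm l') : omegaList op l = omegaList op l' := by
  induction h with
  | nil => rfl
  | cons _ _ ih => funext u; simp only [omegaList, ih]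
  | swap => funext u; exact hcs _ _ _
  | trans _ _ ih₁ ih₂ => rw [ih₁, ih₂]

lemma omegaList_bijective (hbij : ∀ s : S, Function.Bijective (op s)) :
    ∀ l : List S, Function.Bijective (omegaList op l)
  | [] => Function.bijective_id
  | _ :: l => (hbij _).comp (omegaList_bijective hbij l)

/-- `piList op [x_k, …, x_1] = Π_k(x_1, …, x_k) = Ω_1(x_1) ⋯ Ω_k(x_1, …, x_k)`. -/
def piList : List S → StructureMonoid op
  | [] => 1
  | x :: l => piList l * mkM op (omegaList op l x)

lemma mkM_mul_mkM_op (s t : S) :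
    mkM op s * mkM op (op s t) = mkM op t * mkM op (op t s) := by
  simp only [mkM, ← map_mul]
  exact (conGen (csRel op)).eq.mpr (ConGen.Rel.of _ _ ⟨s, t, rfl, rfl⟩)

lemma piList_perm (hcs : ∀ s t u : S, op (op s t) (op s u) = op (op t s) (op t u))
    {l l' : List S} (h : l.Perm l') : piList op l = piList op l' := by
  induction h with
  | nil => rfl
  | cons _ p ih => simp only [piList, ih, omegaList_perm op hcs p]
  | swap => simp only [piList, omegaList, mul_assoc, mkM_mul_mkM_op]
  | trans _ _ ih₁ ih₂ => rw [ih₁, ih₂]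

lemma exists_eq_piList (hbij : ∀ s : S, Function.Bijective (op s)) (m : StructureMonoid op) :
    ∃ l : List S, m = piList op l := by
  obtain ⟨w, rfl⟩ := Con.mk'_surjective m
  rw [← FreeMonoid.ofList_toList w]
  induction w.toList using List.reverseRecOn with
  | nil => exact ⟨[], map_one _⟩
  | append_singleton w s ih =>
    obtain ⟨l, hl⟩ := ih
    obtain ⟨x, hx⟩ := (omegaList_bijective op hbij l).surjective s
    refine ⟨x :: l, ?_⟩
    rw [FreeMonoid.ofList_append, map_mul, hl, piList, hx]
    rfl

end CycleSet

section Representation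

variable {S : Type*} [Fintype S] [DecidableEq S] {op : S → S → S}
  {hbij : ∀ s : S, Function.Bijective (op s)}
  {Θ : StructureMonoid op →* Matrix S S ℚ[X]}

lemma theta_piList (hΘ : ∀ s : S, Θ (mkM op s) = theta op hbij s) (l : List S) :
    Θ (piList op l) = diagonal (fun t => X ^ l.count t)
      * Pmat ℚ[X] (Equiv.ofBijective _ (omegaList_bijective op hbij l)) := by
  induction l with
  | nil =>
    have hrefl : Equiv.ofBijective _ (omegaList_bijective op hbij []) = Equiv.refl S :=
      Equiv.ext fun _ => rfl
    simp [piList, hrefl, Pmat_eq_permMatrix]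
  | cons u l ih =>
    have hdiag : (fun t => X ^ l.count t
        * if omegaList op l t = omegaList op l u then (X : ℚ[X]) else 1)
        = fun t => X ^ (u :: l).count t := by
      funext t
      simp only [(omegaList_bijective op hbij l).injective.eq_iff, List.count_cons, beq_iff_eq]
      rcases eq_or_ne u t with rfl | h
      · simp [pow_succ]
      · simp [h, h.symm]
    rw [piList, map_mul, ih, hΘ, theta, Dmat, diagonal_mul_Pmat_mul_diagonal_mul_Pmat]
    simp only [Equiv.ofBijective_apply, hdiag]
    rfl

lemma eq_of_theta_eq_diagonal_mul_Pmat
    (hcs : ∀ s t u : S, op (op s t) (op s u) = op (op t s) (op t u))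
    (hΘ : ∀ s : S, Θ (mkM op s) = theta op hbij s) {f g : StructureMonoid op}
    {d : S → ℚ[X]} {σf σg : Equiv.Perm S} (hf : Θ f = diagonal d * Pmat ℚ[X] σf)
    (hg : Θ g = diagonal d * Pmat ℚ[X] σg) : f = g := by
  have d_eq_X_pow_count (l : List S) {σ : Equiv.Perm S}
      (h : Θ (piList op l) = diagonal d * Pmat ℚ[X] σ) : d = fun t => X ^ l.count t :=
    diagonal_eq_of_diagonal_mul_Pmat_eq (fun _ => pow_ne_zero _ X_ne_zero)
      (h.symm.trans (theta_piList hΘ l))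
  obtain ⟨l, rfl⟩ := exists_eq_piList op hbij f
  obtain ⟨l', rfl⟩ := exists_eq_piList op hbij g
  have hcount : ∀ t, l.count t = l'.count t := fun t => by
    have hX := congr_fun ((d_eq_X_pow_count l hf).symm.trans (d_eq_X_pow_count l' hg)) t
    simpa using congr_arg natDegree hX
  exact piList_perm op hcs (List.perm_iff_count.mpr hcount)

lemma theta_injective (hcs : ∀ s t u : S, op (op s t) (op s u) = op (op t s) (op t u))
    (hΘ : ∀ s : S, Θ (mkM op s) = theta op hbij s) : Function.Injective Θ := by
  intro f g hfg
  obtain ⟨l, rfl⟩ := exists_eq_piList op hbij f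
  exact eq_of_theta_eq_diagonal_mul_Pmat hcs hΘ (theta_piList hΘ l) (hfg ▸ theta_piList hΘ l)

lemma isUnit_map_theta (s : S) :
    IsUnit ((theta op hbij s).map (algebraMap ℚ[X] (RatFunc ℚ))) := by
  rw [theta, Dmat, Matrix.map_mul, diagonal_map (map_zero _), Pmat_map]
  refine isUnit_diagonal_mul_Pmat (fun t => ?_) _
  split_ifs <;> simp [RatFunc.algebraMap_X, RatFunc.X_ne_zero]

end Representation

section StructureGroup

variable {S : Type*} (op : S → S → S)

lemma StructureMonoid.hom_ext {N : Type*} [Monoid N] {f g : StructureMonoid op →* N}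
    (h : ∀ s, f (mkM op s) = g (mkM op s)) : f = g :=
  Con.hom_ext (FreeMonoid.hom_eq h)

lemma of_mul_of_op (s t : S) :
    (PresentedGroup.of s * PresentedGroup.of (op s t) : StructureGroup op)
      = PresentedGroup.of t * PresentedGroup.of (op t s) := by
  simp only [PresentedGroup.of, ← map_mul]
  exact PresentedGroup.mk_eq_mk_of_mul_inv_mem ⟨s, t, rfl⟩

def toStructureGroup : StructureMonoid op →* StructureGroup op :=
  (conGen (csRel op)).lift (FreeMonoid.lift PresentedGroup.of) <| Con.conGen_le.mpr <| by
    rintro _ _ ⟨s, t, rfl, rfl⟩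
    simpa using of_mul_of_op op s t

lemma toStructureGroup_mkM (s : S) :
    toStructureGroup op (mkM op s) = PresentedGroup.of s := by
  simp [toStructureGroup, mkM]

lemma exists_units_comp_toStructureGroup {N : Type*} [Monoid N] (f : StructureMonoid op →* N)
    (hf : ∀ s, IsUnit (f (mkM op s))) :
    ∃ g : StructureGroup op →* Nˣ, (Units.coeHom N).comp (g.comp (toStructureGroup op)) = f := by
  have hrels : ∀ r ∈ csGrpRels op, FreeGroup.lift (fun s => (hf s).unit) r = 1 := by
    rintro _ ⟨s, t, rfl⟩
    simp only [map_mul, map_inv, FreeGroup.lift_apply_of, mul_inv_eq_one]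
    ext
    simp [← map_mul, mkM_mul_mkM_op]
  refine ⟨PresentedGroup.toGroup hrels, StructureMonoid.hom_ext op fun s => ?_⟩
  simp [toStructureGroup_mkM, PresentedGroup.toGroup.of]

lemma toStructureGroup_injective_of_injective {N : Type*} [Monoid N]
    (f : StructureMonoid op →* N) (hf : ∀ s, IsUnit (f (mkM op s)))
    (hinj : Function.Injective f) :
    Function.Injective (toStructureGroup op) := by
  obtain ⟨g, hg⟩ := exists_units_comp_toStructureGroup op f hf
  rw [← hg, MonoidHom.coe_comp, MonoidHom.coe_comp] at hinj
  exact hinj.of_comp.of_comp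

end StructureGroup

/-- Every element of the structure monoid of a finite cycle set is uniquely determined by
the diagonal part of its image under the monomial representation; consequently the
representation is injective on the monoid and the monoid embeds in the structure group. -/
theorem monoid_injective {S : Type*} [Fintype S] [DecidableEq S] (op : S → S → S)
    (hbij : ∀ s : S, Function.Bijective (op s))
    (hcs : ∀ s t u : S, op (op s t) (op s u) = op (op t s) (op t u))
    (Θ : StructureMonoid op →* Matrix S S (Polynomial ℚ))
    (hΘ : ∀ s : S, Θ (mkM op s) = theta op hbij s) :
    (∀ (f g : StructureMonoid op) (dvec : S → Polynomial ℚ) (σf σg : Equiv.Perm S),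
        Θ f = Matrix.diagonal dvec * Pmat (Polynomial ℚ) σf →
        Θ g = Matrix.diagonal dvec * Pmat (Polynomial ℚ) σg → f = g) ∧
    Function.Injective Θ ∧
    ∃ φ : StructureMonoid op →* StructureGroup op,
      (∀ s : S, φ (mkM op s) = PresentedGroup.of (rels := csGrpRels op) s) ∧
        Function.Injective φ := by
  have hinj : Function.Injective Θ := theta_injective hcs hΘ
  refine ⟨fun _ _ _ _ _ => eq_of_theta_eq_diagonal_mul_Pmat hcs hΘ, hinj,
    toStructureGroup op, toStructureGroup_mkM op, ?_⟩
  let C := algebraMap ℚ[X] (RatFunc ℚ)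
  refine toStructureGroup_injective_of_injective op (C.mapMatrix.toMonoidHom.comp Θ)
    (fun s => ?_) ((map_injective (RatFunc.algebraMap_injective ℚ)).comp hinj)
  simpa [hΘ] using isUnit_map_theta s
end

section
/- For a finite cycle set S, there exists a positive integer d (the Dehornoy class) such that for every s ∈ S the element s^{[d]} = Π_d(s,...,s) is a diagonal matrix under the monomial representation, i.e., its permutation part is the identity. -/
/-!
Under `Θ`, the element `s^{[k]}` is a monomial matrix whose permutation part is
`π_k(s) = ψ(s) ψ(T s) ⋯ ψ(T^{k-1} s)`, where `T s = s * s`. Since `S` is finite, the family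
`s ↦ π_k(s)` takes the same value for some `a < b`, and then `π_{b-a}` is trivial on the image
of `T^a`. The cycle set identity gives `π_k(t * u)(t * x) = π_k(u)(t) * π_k(u)(x)`, so the set
of `u` with `π_{b-a}(u)` trivial is mapped into itself by every `ψ(t)`, hence (being finite)
also by every `ψ(t)⁻¹`. As `T u = ψ(u) u`, it then contains every `u`, so `d = b - a` works.
-/

section Permutations

variable {S : Type*} (op : S → S → S) (hbij : ∀ s : S, Function.Bijective (op s))

/-- `π_k(s)`, composed left to right (`Equiv.trans`) in the order of the factors of
`s^{[k]}`. -/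
noncomputable def piPerm : ℕ → S → Equiv.Perm S
  | 0, _ => Equiv.refl S
  | k + 1, s => (piPerm k s).trans (psi op hbij ((fun x => op x x)^[k] s))

@[simp] lemma psi_apply (s t : S) : psi op hbij s t = op s t := rfl

lemma piPerm_succ' (k : ℕ) (s : S) :
    piPerm op hbij (k + 1) s = (psi op hbij s).trans (piPerm op hbij k (op s s)) := by
  induction k generalizing s with
  | zero => rfl
  | succ k ih =>
    change (piPerm op hbij (k + 1) s).trans _ = _
    rw [ih, Function.iterate_succ_apply]
    rfl

lemma piPerm_add (a b : ℕ) (s : S) :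
    piPerm op hbij (a + b) s =
      (piPerm op hbij a s).trans (piPerm op hbij b ((fun x => op x x)^[a] s)) := by
  induction b with
  | zero => rfl
  | succ b ih =>
    change (piPerm op hbij (a + b) s).trans (psi op hbij ((fun x => op x x)^[a + b] s)) = _
    rw [ih, Equiv.trans_assoc, Nat.add_comm a b, Function.iterate_add_apply]
    rfl

lemma op_piPerm_apply_piPerm_apply
    (hcs : ∀ s t u : S, op (op s t) (op s u) = op (op t s) (op t u)) (k : ℕ) (u t x : S) :
    op (piPerm op hbij k u t) (piPerm op hbij k u x) = piPerm op hbij k (op t u) (op t x) := by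
  induction k generalizing u t x with
  | zero => rfl
  | succ k ih =>
    simp only [piPerm_succ', Equiv.trans_apply, psi_apply]
    rw [ih, hcs u t u, hcs u t x]

lemma piPerm_op_eq_refl (hcs : ∀ s t u : S, op (op s t) (op s u) = op (op t s) (op t u))
    {k : ℕ} {u : S} (hu : piPerm op hbij k u = Equiv.refl S) (t : S) :
    piPerm op hbij k (op t u) = Equiv.refl S := by
  ext y
  obtain ⟨x, rfl⟩ := (hbij t).2 y
  simpa [hu] using (op_piPerm_apply_piPerm_apply op hbij hcs k u t x).symm

lemma Omega_const (k : ℕ) (s : S) : Omega op k (fun _ => s) = (fun x => op x x)^[k] s := by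
  induction k with
  | zero => rfl
  | succ k ih => simp only [Omega, ite_self, ih, Function.iterate_succ_apply']

theorem exists_piPerm_eq_refl [Finite S]
    (hcs : ∀ s t u : S, op (op s t) (op s u) = op (op t s) (op t u)) :
    ∃ c : ℕ, 0 < c ∧ ∀ s : S, piPerm op hbij c s = Equiv.refl S := by
  obtain ⟨a, b, hab, hπ⟩ := Set.finite_univ.exists_lt_map_eq_of_forall_mem
    (f := fun k s => piPerm op hbij k s) (fun _ => Set.mem_univ _)
  obtain ⟨c, rfl⟩ := Nat.exists_eq_add_of_lt hab
  set A := {u : S | piPerm op hbij (c + 1) u = Equiv.refl S}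
  have hT : ∀ s, (fun x => op x x)^[a] s ∈ A := fun s => mul_eq_right.mp <| by
    rw [Equiv.Perm.mul_def, ← piPerm_add, ← Nat.add_assoc]
    exact (congrFun hπ s).symm
  have hmaps : ∀ t, Set.MapsTo (psi op hbij t) A A := fun t _ hu =>
    piPerm_op_eq_refl op hbij hcs hu t
  have hpre : ∀ t u, op t u ∈ A → u ∈ A := fun t u h =>
    (psi op hbij t).symm_apply_apply u ▸
      Equiv.Perm.perm_symm_mapsTo_of_mapsTo _ (hmaps t) (show psi op hbij t u ∈ A from h)
  have hiter : ∀ n u, (fun x => op x x)^[n] u ∈ A → u ∈ A := by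
    intro n
    induction n with
    | zero => exact fun _ => id
    | succ n ih => exact fun u h => hpre u u (ih _ (by rwa [← Function.iterate_succ_apply]))
  exact ⟨c + 1, Nat.succ_pos c, fun s => hiter a s (hT s)⟩

end Permutations

section Matrices

variable {ι R : Type*} [DecidableEq ι] [Semiring R]

lemma Pmat_refl : Pmat R (Equiv.refl ι) = 1 := by
  ext i j
  simp [Pmat, Matrix.one_apply, eq_comm]

variable [Fintype ι]

lemma Pmat_mul_Pmat (σ τ : Equiv.Perm ι) : Pmat R σ * Pmat R τ = Pmat R (σ.trans τ) := by
  ext i j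
  rw [Matrix.mul_apply, Finset.sum_eq_single (σ i)]
  · simp [Pmat]
    rfl
  · intro k _ hk
    simp [Pmat, hk]
  · simp

lemma Pmat_mul_diagonal_s17 (σ : Equiv.Perm ι) (d : ι → R) :
    Pmat R σ * Matrix.diagonal d = Matrix.diagonal (fun i => d (σ i)) * Pmat R σ := by
  ext i j
  rw [Matrix.mul_diagonal, Matrix.diagonal_mul]
  by_cases h : j = σ i <;> simp [Pmat, h]

end Matrices

theorem exists_map_PiExpr_const_eq_diagonal_mul_Pmat {S : Type*} [Fintype S] [DecidableEq S]
    (op : S → S → S) (hbij : ∀ s : S, Function.Bijective (op s))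
    (Θ : StructureMonoid op →* Matrix S S (Polynomial ℚ))
    (hΘ : ∀ s : S, Θ (mkM op s) = theta op hbij s) (k : ℕ) (s : S) :
    ∃ dvec : S → Polynomial ℚ, Θ (PiExpr op (mkM op) k (fun _ => s)) =
      Matrix.diagonal dvec * Pmat (Polynomial ℚ) (piPerm op hbij k s) := by
  induction k with
  | zero => exact ⟨1, by simp [PiExpr, piPerm, Pmat_refl]⟩
  | succ k ih =>
    obtain ⟨dvec, hdvec⟩ := ih
    refine ⟨fun x => dvec x *
      if piPerm op hbij k s x = (fun x => op x x)^[k] s then Polynomial.X else 1, ?_⟩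
    change Θ (PiExpr op (mkM op) k (fun _ => s) * mkM op (Omega op k (fun _ => s))) = _
    rw [map_mul, hdvec, hΘ, Omega_const, theta, Dmat, mul_assoc, ← mul_assoc (Pmat _ _),
      Pmat_mul_diagonal_s17, mul_assoc, Pmat_mul_Pmat, ← mul_assoc, Matrix.diagonal_mul_diagonal]
    rfl

/-- Existence of the Dehornoy class: for a finite cycle set there is a positive integer
`d` such that for every `s`, the element `s^{[d]} = Π_d(s,…,s)` is diagonal under the
monomial representation. -/
theorem exists_dehornoy_class {S : Type*} [Fintype S] [DecidableEq S] (op : S → S → S)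
    (hbij : ∀ s : S, Function.Bijective (op s))
    (hcs : ∀ s t u : S, op (op s t) (op s u) = op (op t s) (op t u))
    (Θ : StructureMonoid op →* Matrix S S (Polynomial ℚ))
    (hΘ : ∀ s : S, Θ (mkM op s) = theta op hbij s) :
    ∃ d : ℕ, 0 < d ∧ ∀ s : S, ∃ dvec : S → Polynomial ℚ,
      Θ (PiExpr op (mkM op) d (fun _ => s)) = Matrix.diagonal dvec := by
  obtain ⟨d, hd, hπ⟩ := exists_piPerm_eq_refl op hbij hcs
  refine ⟨d, hd, fun s => ?_⟩
  obtain ⟨dvec, hdvec⟩ := exists_map_PiExpr_const_eq_diagonal_mul_Pmat op hbij Θ hΘ d s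
  exact ⟨dvec, by rw [hdvec, hπ s, Pmat_refl, mul_one]⟩
end
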